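/- Let z ∈ ℂ₊ and let (φ, φ̃) be an admissible solution at z. Set ζ̃(f) = σ²(𝛄⋆φ̃)(f), F₁(f) = T⁻¹ tr[S(f,z)S(f,z)*] and F₂(f) = T⁻¹ tr[S̃(f,z)(𝐀*𝐀)(f)S̃(f,z)*]/|1+ζ̃(f)|². Then for every f ∈ [0,1]: Im φ(f) > 0 and F₁(f) > 0, and there exist constants C > 0 and C′ > 0 not depending on f such that 0 < Im(z φ̃(f)) < C and F₂(f) ≥ C′ · tr (𝐀*𝐀)(f) for every f ∈ [0,1]. -/

import Mathlib

open MeasureTheory Matrix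

noncomputable section

/-- Spectral norm (l2 operator norm) of a complex matrix. -/
def specNorm {m n : Type*} [Fintype m] [Fintype n] [DecidableEq n]
    (M : Matrix m n ℂ) : ℝ :=
  ‖(Matrix.toEuclideanLin.trans LinearMap.toContinuousLinearMap) M‖

/-- The Fourier transform `𝐀(f) = ∑_{k=-L}^{L} e^{2πikf} A(k)`. -/
def fA (N T : ℕ) (L : ℕ) (A : ℤ → Matrix (Fin N) (Fin T) ℂ) (f : ℝ) :
    Matrix (Fin N) (Fin T) ℂ :=
  ∑ k ∈ Finset.Icc (-(L:ℤ)) (L:ℤ),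
    Complex.exp (2 * Real.pi * Complex.I * (k : ℂ) * (f : ℂ)) • A k

/-- `(𝛄 ⋆ ψ)(f) = ∫₀¹ 𝛄(f-u) ψ(u) du`. -/
def convP (bγ : ℝ → ℝ) (ψ : ℝ → ℂ) (f : ℝ) : ℂ :=
  ∫ u in (0:ℝ)..1, (bγ (f - u) : ℂ) * ψ u

/-- `(𝛄(-·) ⋆ ψ)(f) = ∫₀¹ 𝛄(u-f) ψ(u) du`. -/
def convM (bγ : ℝ → ℝ) (ψ : ℝ → ℂ) (f : ℝ) : ℂ :=
  ∫ u in (0:ℝ)..1, (bγ (u - f) : ℂ) * ψ u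

/-- The matrix `S(f,z)`. -/
def Smat (N T L : ℕ) (σ2 : ℝ) (bγ : ℝ → ℝ) (A : ℤ → Matrix (Fin N) (Fin T) ℂ)
    (φ φt : ℝ → ℂ) (z : ℂ) (f : ℝ) : Matrix (Fin N) (Fin N) ℂ :=
  ((-z * (1 + (σ2 : ℂ) * convP bγ φt f)) • (1 : Matrix (Fin N) (Fin N) ℂ)
    + (1 + (σ2 : ℂ) * convM bγ φ f)⁻¹ • (fA N T L A f * (fA N T L A f)ᴴ))⁻¹

/-- The matrix `S̃(f,z)`. -/
def StMat (N T L : ℕ) (σ2 : ℝ) (bγ : ℝ → ℝ) (A : ℤ → Matrix (Fin N) (Fin T) ℂ)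
    (φ φt : ℝ → ℂ) (z : ℂ) (f : ℝ) : Matrix (Fin T) (Fin T) ℂ :=
  ((-z * (1 + (σ2 : ℂ) * convM bγ φ f)) • (1 : Matrix (Fin T) (Fin T) ℂ)
    + (1 + (σ2 : ℂ) * convP bγ φt f)⁻¹ • ((fA N T L A f)ᴴ * fA N T L A f))⁻¹

/-- A pair `(φ, φ̃)` of integrable functions is an admissible solution at `z`. -/
def IsAdmissible (N T L : ℕ) (σ2 : ℝ) (bγ : ℝ → ℝ)
    (A : ℤ → Matrix (Fin N) (Fin T) ℂ) (z : ℂ) (φ φt : ℝ → ℂ) : Prop :=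
  IntegrableOn φ (Set.Icc (0:ℝ) 1) ∧ IntegrableOn φt (Set.Icc (0:ℝ) 1) ∧
  (∀ f ∈ Set.Icc (0:ℝ) 1,
    0 ≤ (φ f).im ∧ 0 ≤ (φt f).im ∧ 0 ≤ (z * φ f).im ∧ 0 ≤ (z * φt f).im) ∧
  (∀ f ∈ Set.Icc (0:ℝ) 1,
    φ f = (T : ℂ)⁻¹ * (Smat N T L σ2 bγ A φ φt z f).trace ∧
    φt f = (T : ℂ)⁻¹ * (StMat N T L σ2 bγ A φ φt z f).trace)

section Kernels

variable (N T L : ℕ) (σ2 : ℝ) (bγ : ℝ → ℝ) (A : ℤ → Matrix (Fin N) (Fin T) ℂ)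
  (φ φt : ℝ → ℂ) (z : ℂ)

/-- `ζ(f) = σ²(𝛄(-·)⋆φ)(f)`. -/
def zeta (f : ℝ) : ℂ := (σ2 : ℂ) * convM bγ φ f

/-- `ζ̃(f) = σ²(𝛄⋆φ̃)(f)`. -/
def zetat (f : ℝ) : ℂ := (σ2 : ℂ) * convP bγ φt f

def K11 (f u : ℝ) : ℝ :=
  σ2 * bγ (u - f) *
    ((T : ℝ)⁻¹ * ((Smat N T L σ2 bγ A φ φt z f * (fA N T L A f * (fA N T L A f)ᴴ)
        * (Smat N T L σ2 bγ A φ φt z f)ᴴ).trace.re)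
      / ‖1 + zeta σ2 bγ φ f‖ ^ 2)

def K12 (f u : ℝ) : ℝ :=
  σ2 * bγ (f - u) *
    ((T : ℝ)⁻¹ * ((Smat N T L σ2 bγ A φ φt z f
        * (Smat N T L σ2 bγ A φ φt z f)ᴴ).trace.re))

def K21 (f u : ℝ) : ℝ :=
  σ2 * bγ (u - f) * (‖z‖ ^ 2 *
    ((T : ℝ)⁻¹ * ((StMat N T L σ2 bγ A φ φt z f
        * (StMat N T L σ2 bγ A φ φt z f)ᴴ).trace.re)))

def K22 (f u : ℝ) : ℝ :=
  σ2 * bγ (f - u) *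
    ((T : ℝ)⁻¹ * ((StMat N T L σ2 bγ A φ φt z f * ((fA N T L A f)ᴴ * fA N T L A f)
        * (StMat N T L σ2 bγ A φ φt z f)ᴴ).trace.re)
      / ‖1 + zetat σ2 bγ φt f‖ ^ 2)

def F1 (f : ℝ) : ℝ :=
  (T : ℝ)⁻¹ * ((Smat N T L σ2 bγ A φ φt z f
      * (Smat N T L σ2 bγ A φ φt z f)ᴴ).trace.re)

def F2 (f : ℝ) : ℝ :=
  (T : ℝ)⁻¹ * ((StMat N T L σ2 bγ A φ φt z f * ((fA N T L A f)ᴴ * fA N T L A f)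
      * (StMat N T L σ2 bγ A φ φt z f)ᴴ).trace.re)
    / ‖1 + zetat σ2 bγ φt f‖ ^ 2

end Kernels

/-!
Write `S = M⁻¹` with `M = c • 1 + d • Cᴴ C`; all matrix norms are Frobenius norms. Since
`M S = 1`, `conj (tr S) = tr (Sᴴ M S) = c ‖S‖² + d ‖C S‖²`. The sign conditions on `φ, φ̃` pass
through the nonnegative kernel `𝛄` to `ζ = σ²(𝛄(-·)⋆φ)` and `ζ̃`, which makes `Im c ≤ -Im z` and
`Im d ≤ 0` for both `S` and `S̃`. Hence `M` is invertible and `Im tr S ≥ Im z ‖S‖²`; together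
with `|tr S| ≤ K ‖S‖` this bounds `φ, φ̃`, then `ζ, ζ̃`, then `‖M‖ ≤ B` uniformly in `f`, so that
`‖S X‖ ≥ ‖X‖ / B`. This gives `Im φ ≥ δ > 0` and `F₁ > 0`. As `𝛄` has mass `γ(0) = 1`,
`Im ζ ≥ σ² δ`, and the identity multiplied by `z` gives `Im (z tr S̃) ≥ |z|² Im ζ ‖S̃‖² > 0`.
Finally `F₂ = T⁻¹ ‖S̃ 𝐀*‖² / |1 + ζ̃|²` with `‖S̃ 𝐀*‖ ≥ ‖𝐀‖ / B` and `|1 + ζ̃| ≤ B`.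
-/

open Complex Set Real ComplexConjugate

attribute [local instance] Matrix.frobeniusNormedAddCommGroup Matrix.frobeniusNormedSpace

namespace Matrix

variable {m n p : Type*} [Fintype m] [Fintype n] [Fintype p]

lemma frobenius_norm_sq (X : Matrix m n ℂ) : ‖X‖ ^ 2 = ∑ i, ∑ j, ‖X i j‖ ^ 2 := by
  rw [frobenius_norm_def, ← Real.rpow_natCast, ← Real.rpow_mul (by positivity)]
  norm_num

lemma trace_conjTranspose_mul_self_eq_norm_sq (X : Matrix m n ℂ) :
    (Xᴴ * X).trace = (‖X‖ ^ 2 : ℝ) := by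
  rw [frobenius_norm_sq, Finset.sum_comm]
  push_cast
  simp [trace, mul_apply, Complex.conj_mul']

lemma trace_mul_conjTranspose_self_eq_norm_sq (X : Matrix m n ℂ) :
    (X * Xᴴ).trace = (‖X‖ ^ 2 : ℝ) := by
  simpa [frobenius_norm_conjTranspose] using trace_conjTranspose_mul_self_eq_norm_sq Xᴴ

lemma div_le_norm_inv_mul [DecidableEq n] {M : Matrix n n ℂ} (hM : IsUnit M.det) {B : ℝ}
    (hB : ‖M‖ ≤ B) (hB0 : 0 < B) (X : Matrix n m ℂ) : ‖X‖ / B ≤ ‖M⁻¹ * X‖ := by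
  rw [div_le_iff₀ hB0]
  calc ‖X‖ = ‖M * (M⁻¹ * X)‖ := by rw [← Matrix.mul_assoc, mul_nonsing_inv _ hM, Matrix.one_mul]
    _ ≤ ‖M‖ * ‖M⁻¹ * X‖ := frobenius_norm_mul _ _
    _ ≤ ‖M⁻¹ * X‖ * B := by rw [mul_comm]; gcongr

lemma exists_norm_trace_le : ∃ K, ∀ X : Matrix n n ℂ, ‖X.trace‖ ≤ K * ‖X‖ :=
  ⟨_, (LinearMap.toContinuousLinearMap (traceLinearMap n ℂ ℂ)).le_opNorm⟩

variable [DecidableEq n]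

lemma trace_conjTranspose_mul_smul_one_add_smul_gram_mul (c d : ℂ) (C : Matrix p n ℂ)
    (X : Matrix n m ℂ) :
    (Xᴴ * (c • 1 + d • (Cᴴ * C)) * X).trace
      = c * (‖X‖ ^ 2 : ℝ) + d * (‖C * X‖ ^ 2 : ℝ) := by
  have h : Xᴴ * (c • 1 + d • (Cᴴ * C)) * X = c • (Xᴴ * X) + d • ((C * X)ᴴ * (C * X)) := by
    simp [Matrix.mul_add, Matrix.add_mul, Matrix.mul_assoc, conjTranspose_mul]
  rw [h, trace_add, trace_smul, trace_smul, trace_conjTranspose_mul_self_eq_norm_sq,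
    trace_conjTranspose_mul_self_eq_norm_sq, smul_eq_mul, smul_eq_mul]

lemma isUnit_det_smul_one_add_smul_gram {c d : ℂ} (hc : c.im < 0) (hd : d.im ≤ 0)
    (C : Matrix p n ℂ) : IsUnit (c • (1 : Matrix n n ℂ) + d • (Cᴴ * C)).det := by
  have hinj : Function.Injective (LinearMap.mulLeft ℂ (c • (1 : Matrix n n ℂ) + d • (Cᴴ * C))) := by
    rw [← LinearMap.ker_eq_bot, LinearMap.ker_eq_bot']
    intro X hX
    have h := congrArg (fun Y => (Xᴴ * Y).trace.im) hX
    simp only [LinearMap.mulLeft_apply, ← Matrix.mul_assoc,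
      trace_conjTranspose_mul_smul_one_add_smul_gram_mul, Matrix.mul_zero, trace_zero] at h
    simp only [add_im, im_mul_ofReal, zero_im] at h
    have : ‖X‖ ^ 2 = 0 := by nlinarith [sq_nonneg ‖X‖, sq_nonneg ‖C * X‖]
    simpa using this
  obtain ⟨X, hX⟩ := (LinearMap.injective_iff_surjective.mp hinj) 1
  exact isUnit_det_of_right_inverse hX

lemma star_trace_inv_smul_one_add_smul_gram (c d : ℂ) (C : Matrix p n ℂ) :
    star (c • (1 : Matrix n n ℂ) + d • (Cᴴ * C))⁻¹.trace
      = c * (‖(c • (1 : Matrix n n ℂ) + d • (Cᴴ * C))⁻¹‖ ^ 2 : ℝ)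
        + d * (‖C * (c • (1 : Matrix n n ℂ) + d • (Cᴴ * C))⁻¹‖ ^ 2 : ℝ) := by
  by_cases h : IsUnit (c • (1 : Matrix n n ℂ) + d • (Cᴴ * C)).det
  · rw [← trace_conjTranspose, ← trace_conjTranspose_mul_smul_one_add_smul_gram_mul,
      Matrix.mul_assoc, mul_nonsing_inv _ h, Matrix.mul_one]
  · simp [nonsing_inv_apply_not_isUnit _ h]

end Matrix

section Pencil

variable {n p : Type*} [Fintype n] [Fintype p] [DecidableEq n] {z w w' : ℂ}

/-- `S(f,z)` and `S̃(f,z)` are the inverses of `pencil z ζ ζ̃ (𝐀𝐀*)` and `pencil z ζ̃ ζ (𝐀*𝐀)`. -/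
def pencil (z w w' : ℂ) (G : Matrix n n ℂ) : Matrix n n ℂ :=
  (-z * (1 + w')) • 1 + (1 + w)⁻¹ • G

lemma im_neg_mul_one_add_le (h : 0 ≤ (z * w).im) : (-z * (1 + w)).im ≤ -z.im := by
  simp only [neg_mul, neg_im, mul_add, mul_one, add_im]
  linarith

lemma im_inv_one_add_nonpos (h : 0 ≤ w.im) : (1 + w)⁻¹.im ≤ 0 := by
  rw [inv_im, add_im, one_im, zero_add, neg_div]
  exact neg_nonpos.mpr (div_nonneg h (normSq_nonneg _))

lemma im_le_im_mul_one_add (h : 0 ≤ (z * w).im) : z.im ≤ (z * (1 + w)).im := by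
  simp only [mul_add, mul_one, add_im]
  linarith

lemma one_add_ne_zero (hz : 0 < z.im) (h : 0 ≤ (z * w).im) : 1 + w ≠ 0 := fun h0 => by
  have := im_le_im_mul_one_add h
  rw [h0, mul_zero, zero_im] at this
  linarith

lemma norm_inv_one_add_le (hz : 0 < z.im) (h : 0 ≤ (z * w).im) :
    ‖(1 + w)⁻¹‖ ≤ ‖z‖ / z.im := by
  have hle : z.im ≤ ‖z‖ * ‖1 + w‖ :=
    calc z.im ≤ (z * (1 + w)).im := im_le_im_mul_one_add h
      _ ≤ ‖z * (1 + w)‖ := im_le_norm _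
      _ = ‖z‖ * ‖1 + w‖ := norm_mul _ _
  rw [norm_inv, inv_eq_one_div, div_le_div_iff₀ (norm_pos_iff.mpr (one_add_ne_zero hz h)) hz]
  linarith

lemma isUnit_det_pencil (hz : 0 < z.im) (hw : 0 ≤ w.im) (hw' : 0 ≤ (z * w').im)
    (C : Matrix p n ℂ) : IsUnit (pencil z w w' (Cᴴ * C)).det :=
  Matrix.isUnit_det_smul_one_add_smul_gram (by linarith [im_neg_mul_one_add_le hw'])
    (im_inv_one_add_nonpos hw) C

lemma star_trace_inv_pencil (C : Matrix p n ℂ) :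
    star (pencil z w w' (Cᴴ * C))⁻¹.trace
      = -z * (1 + w') * (‖(pencil z w w' (Cᴴ * C))⁻¹‖ ^ 2 : ℝ)
        + (1 + w)⁻¹ * (‖C * (pencil z w w' (Cᴴ * C))⁻¹‖ ^ 2 : ℝ) :=
  Matrix.star_trace_inv_smul_one_add_smul_gram _ _ C

lemma im_mul_norm_inv_pencil_sq_le (hw : 0 ≤ w.im) (hw' : 0 ≤ (z * w').im)
    (C : Matrix p n ℂ) :
    z.im * ‖(pencil z w w' (Cᴴ * C))⁻¹‖ ^ 2 ≤ (pencil z w w' (Cᴴ * C))⁻¹.trace.im := by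
  have h := congrArg im (star_trace_inv_pencil (z := z) (w := w) (w' := w') C)
  simp only [star_def, conj_im, add_im, im_mul_ofReal] at h
  nlinarith [im_neg_mul_one_add_le hw', im_inv_one_add_nonpos hw,
    sq_nonneg ‖(pencil z w w' (Cᴴ * C))⁻¹‖, sq_nonneg ‖C * (pencil z w w' (Cᴴ * C))⁻¹‖]

lemma norm_sq_mul_im_mul_norm_inv_pencil_sq_le (hz : 0 < z.im) (hzw : 0 ≤ (z * w).im)
    (C : Matrix p n ℂ) :
    ‖z‖ ^ 2 * w'.im * ‖(pencil z w w' (Cᴴ * C))⁻¹‖ ^ 2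
      ≤ (z * (pencil z w w' (Cᴴ * C))⁻¹.trace).im := by
  have hc : (z * conj (-z * (1 + w'))).im = ‖z‖ ^ 2 * w'.im := by
    simp only [map_mul, map_neg, map_add, map_one, ← mul_assoc, mul_neg, mul_conj, Complex.sq_norm]
    simp [mul_add]
  have hd : 0 ≤ (z * conj (1 + w)⁻¹).im := by
    have : z * conj (1 + w)⁻¹ = z * (1 + w) * ((normSq (1 + w))⁻¹ : ℝ) := by
      rw [map_inv₀, inv_def, conj_conj, normSq_conj]
      push_cast
      ring
    rw [this, im_mul_ofReal]
    exact mul_nonneg (hz.le.trans (im_le_im_mul_one_add hzw)) (inv_nonneg.mpr (normSq_nonneg _))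
  have hlin : ∀ (c d : ℂ) (s t : ℝ),
      (z * star (c * s + d * t)).im = (z * conj c).im * s + (z * conj d).im * t := by
    intro c d s t
    simp only [star_def, map_add, map_mul, conj_ofReal, mul_add, ← mul_assoc, add_im,
      im_mul_ofReal]
  rw [← star_star (pencil z w w' (Cᴴ * C))⁻¹.trace, star_trace_inv_pencil, hlin, hc]
  nlinarith [sq_nonneg ‖C * (pencil z w w' (Cᴴ * C))⁻¹‖]

lemma exists_norm_trace_inv_pencil_le :
    ∃ K, ∀ (z w w' : ℂ) (C : Matrix p n ℂ), 0 < z.im → 0 ≤ w.im → 0 ≤ (z * w').im →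
      ‖(pencil z w w' (Cᴴ * C))⁻¹.trace‖ ≤ K / z.im := by
  obtain ⟨K, hK⟩ := Matrix.exists_norm_trace_le (n := n)
  refine ⟨K ^ 2, fun z w w' C hz hw hw' => ?_⟩
  set S := (pencil z w w' (Cᴴ * C))⁻¹
  have hlow : z.im * ‖S‖ ^ 2 ≤ ‖S.trace‖ :=
    (im_mul_norm_inv_pencil_sq_le hw hw' C).trans (im_le_norm _)
  have hup := hK S
  have hS : 0 ≤ ‖S‖ * (K - z.im * ‖S‖) := by nlinarith
  rw [le_div_iff₀ hz]
  nlinarith [sq_nonneg (K - z.im * ‖S‖), mul_nonneg hz.le hS, norm_nonneg S]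

lemma norm_pencil_le (hz : 0 < z.im) (hzw : 0 ≤ (z * w).im) (G : Matrix n n ℂ) :
    ‖pencil z w w' G‖ ≤ ‖z‖ * (1 + ‖w'‖) * ‖(1 : Matrix n n ℂ)‖ + ‖z‖ / z.im * ‖G‖ := by
  refine (norm_add_le _ _).trans (add_le_add ?_ ?_) <;> rw [norm_smul]
  · rw [norm_mul, norm_neg]
    gcongr
    exact (norm_add_le _ _).trans_eq (by rw [norm_one])
  · gcongr
    exact norm_inv_one_add_le hz hzw

end Pencil

structure IsNormalizedSpectralDensity (bγ : ℝ → ℝ) : Prop where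
  continuous : Continuous bγ
  nonneg : ∀ x, 0 ≤ bγ x
  periodic : Function.Periodic bγ 1
  integral_eq_one : ∫ u in (0:ℝ)..1, bγ u = 1

lemma convP_eq_convM_comp_neg (bγ : ℝ → ℝ) (ψ : ℝ → ℂ) (f : ℝ) :
    convP bγ ψ f = convM (fun x => bγ (-x)) ψ f := by
  simp [convP, convM]

lemma convM_const_mul (bγ : ℝ → ℝ) (ψ : ℝ → ℂ) (z : ℂ) (f : ℝ) :
    convM bγ (fun u => z * ψ u) f = z * convM bγ ψ f := by
  simp only [convM]
  rw [← intervalIntegral.integral_const_mul]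
  exact intervalIntegral.integral_congr fun u _ => by ring

namespace IsNormalizedSpectralDensity

variable {bγ : ℝ → ℝ} {ψ : ℝ → ℂ}

lemma comp_neg (h : IsNormalizedSpectralDensity bγ) :
    IsNormalizedSpectralDensity (fun x => bγ (-x)) where
  continuous := h.continuous.comp continuous_neg
  nonneg x := h.nonneg (-x)
  periodic x := by
    simp only [neg_add', h.periodic.sub_eq]
  integral_eq_one := by
    rw [intervalIntegral.integral_comp_neg, neg_zero]
    have h1 := h.periodic.intervalIntegral_add_eq (-1) 0
    rw [zero_add] at h1
    simpa using h1.trans h.integral_eq_one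

lemma integral_comp_sub_right_eq_one (h : IsNormalizedSpectralDensity bγ) (f : ℝ) :
    ∫ u in (0:ℝ)..1, bγ (u - f) = 1 := by
  rw [intervalIntegral.integral_comp_sub_right]
  have h1 := h.periodic.intervalIntegral_add_eq (-f) 0
  rw [zero_add] at h1
  simpa [sub_eq_neg_add] using h1.trans h.integral_eq_one

lemma intervalIntegrable_mul (h : IsNormalizedSpectralDensity bγ)
    (hψ : IntegrableOn ψ (Icc 0 1)) (f : ℝ) :
    IntervalIntegrable (fun u => (bγ (u - f) : ℂ) * ψ u) volume 0 1 := by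
  rw [intervalIntegrable_iff_integrableOn_Icc_of_le zero_le_one]
  have := h.continuous
  exact hψ.continuousOn_mul (by fun_prop) isCompact_Icc

lemma le_im_convM (h : IsNormalizedSpectralDensity bγ) (hψ : IntegrableOn ψ (Icc 0 1)) {a : ℝ}
    (ha : ∀ u ∈ Icc (0:ℝ) 1, a ≤ (ψ u).im) (f : ℝ) :
    a ≤ (convM bγ ψ f).im := by
  have := h.continuous
  have hre : IntervalIntegrable (fun u => bγ (u - f) * (ψ u).im) volume 0 1 := by
    rw [intervalIntegrable_iff_integrableOn_Icc_of_le zero_le_one]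
    exact IntegrableOn.continuousOn_mul (by fun_prop) hψ.im isCompact_Icc
  calc a = ∫ u in (0:ℝ)..1, a * bγ (u - f) := by
        rw [intervalIntegral.integral_const_mul, h.integral_comp_sub_right_eq_one, mul_one]
    _ ≤ ∫ u in (0:ℝ)..1, bγ (u - f) * (ψ u).im := by
        refine intervalIntegral.integral_mono_on zero_le_one
          ((by fun_prop : Continuous fun u => a * bγ (u - f)).intervalIntegrable 0 1) hre ?_
        intro u hu
        rw [mul_comm]
        exact mul_le_mul_of_nonneg_left (ha u hu) (h.nonneg _)
    _ = (convM bγ ψ f).im := by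
        simpa [convM] using imCLM.intervalIntegral_comp_comm (h.intervalIntegrable_mul hψ f)

lemma norm_convM_le (h : IsNormalizedSpectralDensity bγ) {K : ℝ}
    (hK : ∀ u ∈ Icc (0:ℝ) 1, ‖ψ u‖ ≤ K) (f : ℝ) :
    ‖convM bγ ψ f‖ ≤ K := by
  have := h.continuous
  calc ‖convM bγ ψ f‖ ≤ ∫ u in (0:ℝ)..1, K * bγ (u - f) := by
        refine intervalIntegral.norm_integral_le_of_norm_le zero_le_one
          (Filter.Eventually.of_forall fun u hu => ?_)
          ((by fun_prop : Continuous fun u => K * bγ (u - f)).intervalIntegrable 0 1)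
        rw [norm_mul, norm_real, Real.norm_of_nonneg (h.nonneg _), mul_comm]
        exact mul_le_mul_of_nonneg_right (hK u (Ioc_subset_Icc_self hu)) (h.nonneg _)
    _ = K := by
        rw [intervalIntegral.integral_const_mul, h.integral_comp_sub_right_eq_one, mul_one]

lemma im_ofReal_mul_convM_nonneg (h : IsNormalizedSpectralDensity bγ) {σ2 : ℝ} (hσ : 0 ≤ σ2)
    {z : ℂ} (hψ : IntegrableOn ψ (Icc 0 1))
    (hcone : ∀ u ∈ Icc (0:ℝ) 1, 0 ≤ (ψ u).im ∧ 0 ≤ (z * ψ u).im) (f : ℝ) :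
    0 ≤ ((σ2 : ℂ) * convM bγ ψ f).im ∧ 0 ≤ (z * ((σ2 : ℂ) * convM bγ ψ f)).im := by
  have h1 := h.le_im_convM hψ (fun u hu => (hcone u hu).1) f
  have h2 := h.le_im_convM (hψ.const_mul z) (fun u hu => (hcone u hu).2) f
  rw [convM_const_mul] at h2
  rw [mul_left_comm, im_ofReal_mul, im_ofReal_mul]
  exact ⟨mul_nonneg hσ h1, mul_nonneg hσ h2⟩

end IsNormalizedSpectralDensity

lemma norm_exp_two_pi_I_mul (k : ℤ) (x : ℝ) : ‖exp (2 * π * I * k * x)‖ = 1 := by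
  rw [show 2 * π * I * k * x = ((2 * π * k * x : ℝ) : ℂ) * I by push_cast; ring]
  exact norm_exp_ofReal_mul_I _

lemma integral_exp_two_pi_I_mul {k : ℤ} (hk : k ≠ 0) :
    ∫ x in (0:ℝ)..1, exp (2 * π * I * k * x) = 0 := by
  have hc : 2 * π * I * k ≠ 0 := by simp [hk, Real.pi_ne_zero, I_ne_zero]
  rw [integral_exp_mul_complex hc]
  simp [show 2 * π * I * k = k * (2 * π * I) by ring, exp_int_mul_two_pi_mul_I]

lemma integral_tsum_fourier {c : ℤ → ℂ} (hc : Summable fun k => ‖c k‖) :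
    ∫ x in (0:ℝ)..1, ∑' k : ℤ, c k * exp (2 * π * I * k * x) = c 0 := by
  have hint : ∀ k : ℤ, Integrable (fun x : ℝ => c k * exp (2 * π * I * k * x))
      (volume.restrict (Ioc 0 1)) := fun k =>
    (by fun_prop : Continuous fun x : ℝ => c k * exp (2 * π * I * k * x)).integrableOn_Ioc
  rw [intervalIntegral.integral_of_le zero_le_one,
    ← integral_tsum_of_summable_integral_norm hint (by simpa [norm_exp_two_pi_I_mul] using hc),
    tsum_eq_single 0 fun k hk => ?_]
  · simp
  · rw [← intervalIntegral.integral_of_le zero_le_one, intervalIntegral.integral_const_mul,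
      integral_exp_two_pi_I_mul hk, mul_zero]

lemma IsNormalizedSpectralDensity.of_fourier {γ : ℤ → ℝ} (hγsum : Summable fun k => |γ k|)
    (hγ0 : γ 0 = 1) {bγ : ℝ → ℝ}
    (hbγ : ∀ f : ℝ, (bγ f : ℂ) = ∑' k : ℤ, (γ k : ℂ) * exp (2 * π * I * k * f))
    (hbγc : Continuous bγ) (hbγnn : ∀ f, 0 ≤ bγ f) (hbγper : Function.Periodic bγ 1) :
    IsNormalizedSpectralDensity bγ where
  continuous := hbγc
  nonneg := hbγnn
  periodic := hbγper
  integral_eq_one := by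
    have h := integral_tsum_fourier (c := fun k => (γ k : ℂ)) (by simpa using hγsum)
    simp only [← hbγ, intervalIntegral.integral_ofReal, hγ0] at h
    exact_mod_cast h

lemma norm_fA_le (N T L : ℕ) (A : ℤ → Matrix (Fin N) (Fin T) ℂ) (f : ℝ) :
    ‖fA N T L A f‖ ≤ ∑ k ∈ Finset.Icc (-(L:ℤ)) L, ‖A k‖ := by
  refine (norm_sum_le _ _).trans (Finset.sum_le_sum fun k _ => ?_)
  rw [norm_smul, norm_exp_two_pi_I_mul, one_mul]

lemma im_natCast_inv_mul (T : ℕ) (x : ℂ) : ((T : ℂ)⁻¹ * x).im = (T : ℝ)⁻¹ * x.im := by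
  rw [← im_ofReal_mul]
  push_cast
  rfl

section Admissible

variable {N T L : ℕ} {σ2 : ℝ} {bγ : ℝ → ℝ} {A : ℤ → Matrix (Fin N) (Fin T) ℂ} {z : ℂ}
  {φ φt : ℝ → ℂ}

lemma Smat_eq_inv_pencil (f : ℝ) :
    Smat N T L σ2 bγ A φ φt z f = (pencil z (zeta σ2 bγ φ f) (zetat σ2 bγ φt f)
      ((fA N T L A f)ᴴᴴ * (fA N T L A f)ᴴ))⁻¹ := by
  rw [conjTranspose_conjTranspose]
  rfl

lemma StMat_eq_inv_pencil (f : ℝ) :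
    StMat N T L σ2 bγ A φ φt z f = (pencil z (zetat σ2 bγ φt f) (zeta σ2 bγ φ f)
      ((fA N T L A f)ᴴ * fA N T L A f))⁻¹ :=
  rfl

lemma F1_eq (f : ℝ) :
    F1 N T L σ2 bγ A φ φt z f = (T : ℝ)⁻¹ * ‖Smat N T L σ2 bγ A φ φt z f‖ ^ 2 := by
  rw [F1, Matrix.trace_mul_conjTranspose_self_eq_norm_sq, ofReal_re]

lemma F2_eq (f : ℝ) :
    F2 N T L σ2 bγ A φ φt z f = (T : ℝ)⁻¹ * ‖StMat N T L σ2 bγ A φ φt z f * (fA N T L A f)ᴴ‖ ^ 2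
      / ‖1 + zetat σ2 bγ φt f‖ ^ 2 := by
  have h : StMat N T L σ2 bγ A φ φt z f * ((fA N T L A f)ᴴ * fA N T L A f)
      * (StMat N T L σ2 bγ A φ φt z f)ᴴ = StMat N T L σ2 bγ A φ φt z f * (fA N T L A f)ᴴ
      * (StMat N T L σ2 bγ A φ φt z f * (fA N T L A f)ᴴ)ᴴ := by
    simp [Matrix.mul_assoc, conjTranspose_mul]
  rw [F2, h, Matrix.trace_mul_conjTranspose_self_eq_norm_sq, ofReal_re]

namespace IsAdmissible

lemma im_zeta_nonneg (hadm : IsAdmissible N T L σ2 bγ A z φ φt)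
    (hbγ : IsNormalizedSpectralDensity bγ) (hσ : 0 ≤ σ2) (f : ℝ) :
    0 ≤ (zeta σ2 bγ φ f).im ∧ 0 ≤ (z * zeta σ2 bγ φ f).im :=
  hbγ.im_ofReal_mul_convM_nonneg hσ hadm.1
    (fun u hu => ⟨(hadm.2.2.1 u hu).1, (hadm.2.2.1 u hu).2.2.1⟩) f

lemma im_zetat_nonneg (hadm : IsAdmissible N T L σ2 bγ A z φ φt)
    (hbγ : IsNormalizedSpectralDensity bγ) (hσ : 0 ≤ σ2) (f : ℝ) :
    0 ≤ (zetat σ2 bγ φt f).im ∧ 0 ≤ (z * zetat σ2 bγ φt f).im := by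
  simp only [zetat, convP_eq_convM_comp_neg]
  exact hbγ.comp_neg.im_ofReal_mul_convM_nonneg hσ hadm.2.1
    (fun u hu => ⟨(hadm.2.2.1 u hu).2.1, (hadm.2.2.1 u hu).2.2.2⟩) f

lemma im_eq (hadm : IsAdmissible N T L σ2 bγ A z φ φt) {u : ℝ} (hu : u ∈ Icc (0:ℝ) 1) :
    (φ u).im = (T : ℝ)⁻¹ * (Smat N T L σ2 bγ A φ φt z u).trace.im := by
  rw [(hadm.2.2.2 u hu).1, im_natCast_inv_mul]

lemma im_mul_eq (hadm : IsAdmissible N T L σ2 bγ A z φ φt) {u : ℝ} (hu : u ∈ Icc (0:ℝ) 1) :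
    (z * φt u).im = (T : ℝ)⁻¹ * (z * (StMat N T L σ2 bγ A φ φt z u).trace).im := by
  rw [(hadm.2.2.2 u hu).2, mul_left_comm, im_natCast_inv_mul]

lemma im_mul_norm_Smat_sq_le (hadm : IsAdmissible N T L σ2 bγ A z φ φt)
    (hbγ : IsNormalizedSpectralDensity bγ) (hσ : 0 ≤ σ2) (f : ℝ) :
    z.im * ‖Smat N T L σ2 bγ A φ φt z f‖ ^ 2 ≤ (Smat N T L σ2 bγ A φ φt z f).trace.im := by
  rw [Smat_eq_inv_pencil]
  exact im_mul_norm_inv_pencil_sq_le (hadm.im_zeta_nonneg hbγ hσ f).1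
    (hadm.im_zetat_nonneg hbγ hσ f).2 _

lemma norm_sq_mul_im_zeta_mul_norm_StMat_sq_le (hadm : IsAdmissible N T L σ2 bγ A z φ φt)
    (hbγ : IsNormalizedSpectralDensity bγ) (hσ : 0 ≤ σ2) (hz : 0 < z.im) (f : ℝ) :
    ‖z‖ ^ 2 * (zeta σ2 bγ φ f).im * ‖StMat N T L σ2 bγ A φ φt z f‖ ^ 2
      ≤ (z * (StMat N T L σ2 bγ A φ φt z f).trace).im := by
  rw [StMat_eq_inv_pencil]
  exact norm_sq_mul_im_mul_norm_inv_pencil_sq_le hz (hadm.im_zetat_nonneg hbγ hσ f).2 _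

lemma exists_norm_le (hadm : IsAdmissible N T L σ2 bγ A z φ φt)
    (hbγ : IsNormalizedSpectralDensity bγ) (hσ : 0 ≤ σ2) (hz : 0 < z.im) :
    ∃ K, ∀ u ∈ Icc (0:ℝ) 1, ‖φ u‖ ≤ K ∧ ‖φt u‖ ≤ K := by
  obtain ⟨K₁, hK₁⟩ := exists_norm_trace_inv_pencil_le (n := Fin N) (p := Fin T)
  obtain ⟨K₂, hK₂⟩ := exists_norm_trace_inv_pencil_le (n := Fin T) (p := Fin N)
  refine ⟨(T : ℝ)⁻¹ * (max K₁ K₂ / z.im), fun u hu => ?_⟩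
  have hζ := hadm.im_zeta_nonneg hbγ hσ u
  have hζt := hadm.im_zetat_nonneg hbγ hσ u
  rw [(hadm.2.2.2 u hu).1, (hadm.2.2.2 u hu).2, norm_mul, norm_mul, norm_inv,
    Complex.norm_natCast]
  constructor <;> refine mul_le_mul_of_nonneg_left ?_ (by positivity)
  · rw [Smat_eq_inv_pencil]
    exact (hK₁ z _ _ (fA N T L A u)ᴴ hz hζ.1 hζt.2).trans
      (div_le_div_of_nonneg_right (le_max_left _ _) hz.le)
  · rw [StMat_eq_inv_pencil]
    exact (hK₂ z _ _ (fA N T L A u) hz hζt.1 hζ.2).trans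
      (div_le_div_of_nonneg_right (le_max_right _ _) hz.le)

lemma exists_norm_pencil_le (hadm : IsAdmissible N T L σ2 bγ A z φ φt)
    (hbγ : IsNormalizedSpectralDensity bγ) (hσ : 0 ≤ σ2) (hz : 0 < z.im) :
    ∃ B > 0, ∀ f, ‖pencil z (zeta σ2 bγ φ f) (zetat σ2 bγ φt f)
          ((fA N T L A f)ᴴᴴ * (fA N T L A f)ᴴ)‖ ≤ B
      ∧ ‖pencil z (zetat σ2 bγ φt f) (zeta σ2 bγ φ f) ((fA N T L A f)ᴴ * fA N T L A f)‖ ≤ B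
      ∧ ‖1 + zetat σ2 bγ φt f‖ ≤ B := by
  obtain ⟨K, hK⟩ := hadm.exists_norm_le hbγ hσ hz
  set a := ∑ k ∈ Finset.Icc (-(L:ℤ)) L, ‖A k‖
  have hζ f : ‖zeta σ2 bγ φ f‖ ≤ σ2 * K := by
    rw [zeta, norm_mul, norm_real, Real.norm_of_nonneg hσ]
    exact mul_le_mul_of_nonneg_left (hbγ.norm_convM_le (fun u hu => (hK u hu).1) f) hσ
  have hζt f : ‖zetat σ2 bγ φt f‖ ≤ σ2 * K := by
    rw [zetat, convP_eq_convM_comp_neg, norm_mul, norm_real, Real.norm_of_nonneg hσ]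
    exact mul_le_mul_of_nonneg_left (hbγ.comp_neg.norm_convM_le (fun u hu => (hK u hu).2) f) hσ
  have hG f : ‖(fA N T L A f)ᴴᴴ * (fA N T L A f)ᴴ‖ ≤ a ^ 2
      ∧ ‖(fA N T L A f)ᴴ * fA N T L A f‖ ≤ a ^ 2 := by
    have h := norm_fA_le N T L A f
    rw [conjTranspose_conjTranspose]
    constructor <;> refine (frobenius_norm_mul _ _).trans ?_ <;>
      rw [frobenius_norm_conjTranspose, sq] <;>
      exact mul_le_mul h h (norm_nonneg _) ((norm_nonneg _).trans h)
  refine ⟨max (max (‖z‖ * (1 + σ2 * K) * ‖(1 : Matrix (Fin N) (Fin N) ℂ)‖ + ‖z‖ / z.im * a ^ 2)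
    (‖z‖ * (1 + σ2 * K) * ‖(1 : Matrix (Fin T) (Fin T) ℂ)‖ + ‖z‖ / z.im * a ^ 2)) (1 + σ2 * K),
    lt_max_of_lt_right (by linarith [(norm_nonneg _).trans (hζ 0)]), fun f => ⟨?_, ?_, ?_⟩⟩
  · refine le_max_of_le_left (le_max_of_le_left
      ((norm_pencil_le hz (hadm.im_zeta_nonneg hbγ hσ f).2 _).trans ?_))
    gcongr
    exacts [hζt f, (hG f).1]
  · refine le_max_of_le_left (le_max_of_le_right
      ((norm_pencil_le hz (hadm.im_zetat_nonneg hbγ hσ f).2 _).trans ?_))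
    gcongr
    exacts [hζ f, (hG f).2]
  · exact le_max_of_le_right ((norm_add_le _ _).trans (by rw [norm_one]; linarith [hζt f]))

lemma div_le_norm_Smat (hadm : IsAdmissible N T L σ2 bγ A z φ φt)
    (hbγ : IsNormalizedSpectralDensity bγ) (hσ : 0 ≤ σ2) (hz : 0 < z.im) {B f : ℝ}
    (hB : ‖pencil z (zeta σ2 bγ φ f) (zetat σ2 bγ φt f)
      ((fA N T L A f)ᴴᴴ * (fA N T L A f)ᴴ)‖ ≤ B) (hB0 : 0 < B) :
    ‖(1 : Matrix (Fin N) (Fin N) ℂ)‖ / B ≤ ‖Smat N T L σ2 bγ A φ φt z f‖ := by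
  rw [Smat_eq_inv_pencil]
  simpa using Matrix.div_le_norm_inv_mul (isUnit_det_pencil hz (hadm.im_zeta_nonneg hbγ hσ f).1
    (hadm.im_zetat_nonneg hbγ hσ f).2 _) hB hB0 (1 : Matrix (Fin N) (Fin N) ℂ)

lemma div_le_norm_StMat_mul {m : Type*} [Fintype m] (hadm : IsAdmissible N T L σ2 bγ A z φ φt)
    (hbγ : IsNormalizedSpectralDensity bγ) (hσ : 0 ≤ σ2) (hz : 0 < z.im) {B f : ℝ}
    (hB : ‖pencil z (zetat σ2 bγ φt f) (zeta σ2 bγ φ f) ((fA N T L A f)ᴴ * fA N T L A f)‖ ≤ B)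
    (hB0 : 0 < B) (X : Matrix (Fin T) m ℂ) :
    ‖X‖ / B ≤ ‖StMat N T L σ2 bγ A φ φt z f * X‖ := by
  rw [StMat_eq_inv_pencil]
  exact Matrix.div_le_norm_inv_mul (isUnit_det_pencil hz (hadm.im_zetat_nonneg hbγ hσ f).1
    (hadm.im_zeta_nonneg hbγ hσ f).2 _) hB hB0 X

lemma le_im_zeta (hadm : IsAdmissible N T L σ2 bγ A z φ φt)
    (hbγ : IsNormalizedSpectralDensity bγ) (hσ : 0 ≤ σ2) {δ : ℝ}
    (hδ : ∀ u ∈ Icc (0:ℝ) 1, δ ≤ (φ u).im) (f : ℝ) : σ2 * δ ≤ (zeta σ2 bγ φ f).im := by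
  rw [zeta, im_ofReal_mul]
  exact mul_le_mul_of_nonneg_left (hbγ.le_im_convM hadm.1 hδ f) hσ

lemma exists_pos_le_norm (hadm : IsAdmissible N T L σ2 bγ A z φ φt)
    (hbγ : IsNormalizedSpectralDensity bγ) (hσ : 0 ≤ σ2) (hz : 0 < z.im) (hN : 0 < N)
    (hT : 0 < T) :
    ∃ ε > 0, ∀ f, ε ≤ ‖Smat N T L σ2 bγ A φ φt z f‖ ∧ ε ≤ ‖StMat N T L σ2 bγ A φ φt z f‖ := by
  have : NeZero N := ⟨hN.ne'⟩
  have : NeZero T := ⟨hT.ne'⟩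
  obtain ⟨B, hB0, hB⟩ := hadm.exists_norm_pencil_le hbγ hσ hz
  have h1N : 0 < ‖(1 : Matrix (Fin N) (Fin N) ℂ)‖ := norm_pos_iff.mpr one_ne_zero
  have h1T : 0 < ‖(1 : Matrix (Fin T) (Fin T) ℂ)‖ := norm_pos_iff.mpr one_ne_zero
  refine ⟨min ‖(1 : Matrix (Fin N) (Fin N) ℂ)‖ ‖(1 : Matrix (Fin T) (Fin T) ℂ)‖ / B,
    div_pos (lt_min h1N h1T) hB0, fun f => ⟨?_, ?_⟩⟩
  · exact (div_le_div_of_nonneg_right (min_le_left _ _) hB0.le).trans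
      (hadm.div_le_norm_Smat hbγ hσ hz (hB f).1 hB0)
  · refine (div_le_div_of_nonneg_right (min_le_right _ _) hB0.le).trans ?_
    simpa using hadm.div_le_norm_StMat_mul hbγ hσ hz (hB f).2.1 hB0 (1 : Matrix (Fin T) (Fin T) ℂ)

lemma F1_pos (hadm : IsAdmissible N T L σ2 bγ A z φ φt)
    (hbγ : IsNormalizedSpectralDensity bγ) (hσ : 0 ≤ σ2) (hz : 0 < z.im) (hN : 0 < N)
    (hT : 0 < T) (f : ℝ) : 0 < F1 N T L σ2 bγ A φ φt z f := by
  obtain ⟨ε, hε0, hε⟩ := hadm.exists_pos_le_norm hbγ hσ hz hN hT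
  rw [F1_eq]
  exact mul_pos (inv_pos.mpr (Nat.cast_pos.mpr hT)) (pow_pos (hε0.trans_le (hε f).1) 2)

lemma exists_pos_le_im (hadm : IsAdmissible N T L σ2 bγ A z φ φt)
    (hbγ : IsNormalizedSpectralDensity bγ) (hσ : 0 ≤ σ2) (hz : 0 < z.im) (hN : 0 < N)
    (hT : 0 < T) : ∃ δ > 0, ∀ u ∈ Icc (0:ℝ) 1, δ ≤ (φ u).im := by
  obtain ⟨ε, hε0, hε⟩ := hadm.exists_pos_le_norm hbγ hσ hz hN hT
  have hT0 : (0:ℝ) < (T : ℝ)⁻¹ := inv_pos.mpr (Nat.cast_pos.mpr hT)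
  refine ⟨(T : ℝ)⁻¹ * (z.im * ε ^ 2), mul_pos hT0 (mul_pos hz (pow_pos hε0 2)), fun u hu => ?_⟩
  rw [hadm.im_eq hu]
  refine mul_le_mul_of_nonneg_left ?_ hT0.le
  exact (mul_le_mul_of_nonneg_left (pow_le_pow_left₀ hε0.le (hε u).1 2) hz.le).trans
    (hadm.im_mul_norm_Smat_sq_le hbγ hσ u)

lemma im_mul_pos (hadm : IsAdmissible N T L σ2 bγ A z φ φt)
    (hbγ : IsNormalizedSpectralDensity bγ) (hσ : 0 < σ2) (hz : 0 < z.im) (hN : 0 < N)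
    (hT : 0 < T) {f : ℝ} (hf : f ∈ Icc (0:ℝ) 1) : 0 < (z * φt f).im := by
  obtain ⟨δ, hδ0, hδ⟩ := hadm.exists_pos_le_im hbγ hσ.le hz hN hT
  obtain ⟨ε, hε0, hε⟩ := hadm.exists_pos_le_norm hbγ hσ.le hz hN hT
  have hζ := (mul_pos hσ hδ0).trans_le (hadm.le_im_zeta hbγ hσ.le hδ f)
  rw [hadm.im_mul_eq hf]
  refine mul_pos (inv_pos.mpr (Nat.cast_pos.mpr hT)) (lt_of_lt_of_le ?_
    (hadm.norm_sq_mul_im_zeta_mul_norm_StMat_sq_le hbγ hσ.le hz f))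
  exact mul_pos (mul_pos (pow_pos (hz.trans_le (im_le_norm z)) 2) hζ)
    (pow_pos (hε0.trans_le (hε f).2) 2)

lemma exists_im_mul_lt (hadm : IsAdmissible N T L σ2 bγ A z φ φt)
    (hbγ : IsNormalizedSpectralDensity bγ) (hσ : 0 ≤ σ2) (hz : 0 < z.im) :
    ∃ C > 0, ∀ f ∈ Icc (0:ℝ) 1, (z * φt f).im < C := by
  obtain ⟨K, hK⟩ := hadm.exists_norm_le hbγ hσ hz
  have hK0 : 0 ≤ K := (norm_nonneg _).trans (hK 0 (left_mem_Icc.mpr zero_le_one)).1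
  refine ⟨‖z‖ * K + 1, by positivity, fun f hf => ?_⟩
  calc (z * φt f).im ≤ ‖z‖ * ‖φt f‖ := (im_le_norm _).trans_eq (norm_mul _ _)
    _ ≤ ‖z‖ * K := by gcongr; exact (hK f hf).2
    _ < ‖z‖ * K + 1 := lt_add_one _

lemma exists_le_F2 (hadm : IsAdmissible N T L σ2 bγ A z φ φt)
    (hbγ : IsNormalizedSpectralDensity bγ) (hσ : 0 ≤ σ2) (hz : 0 < z.im) (hT : 0 < T) :
    ∃ C' > 0, ∀ f, C' * ((fA N T L A f)ᴴ * fA N T L A f).trace.re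
      ≤ F2 N T L σ2 bγ A φ φt z f := by
  obtain ⟨B, hB0, hB⟩ := hadm.exists_norm_pencil_le hbγ hσ hz
  have hT0 : (0:ℝ) < T := Nat.cast_pos.mpr hT
  refine ⟨(T * B ^ 4)⁻¹, by positivity, fun f => ?_⟩
  have h1ζt := norm_pos_iff.mpr (one_add_ne_zero hz (hadm.im_zetat_nonneg hbγ hσ f).2)
  rw [F2_eq, Matrix.trace_conjTranspose_mul_self_eq_norm_sq, ofReal_re]
  calc (T * B ^ 4)⁻¹ * ‖fA N T L A f‖ ^ 2
      = (T : ℝ)⁻¹ * (‖(fA N T L A f)ᴴ‖ / B) ^ 2 / B ^ 2 := by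
        rw [frobenius_norm_conjTranspose]; field_simp
    _ ≤ _ := by
        gcongr
        exacts [hadm.div_le_norm_StMat_mul hbγ hσ hz (hB f).2.1 hB0 _, (hB f).2.2]

end IsAdmissible

end Admissible

theorem bornes_lemma_general
    (N T L : ℕ) (hN : 0 < N) (hT : 0 < T)
    (σ2 : ℝ) (hσ : 0 < σ2)
    (γ : ℤ → ℝ) (hγsum : Summable fun k : ℤ => |γ k|) (hγ0 : γ 0 = 1)
    (bγ : ℝ → ℝ)
    (hbγ : ∀ f : ℝ, (bγ f : ℂ)
      = ∑' k : ℤ, (γ k : ℂ) * Complex.exp (2 * Real.pi * Complex.I * (k : ℂ) * (f : ℂ)))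
    (hbγc : Continuous bγ) (hbγnn : ∀ f, 0 ≤ bγ f) (hbγper : Function.Periodic bγ 1)
    (A : ℤ → Matrix (Fin N) (Fin T) ℂ)
    (z : ℂ) (hz : 0 < z.im) (φ φt : ℝ → ℂ)
    (hadm : IsAdmissible N T L σ2 bγ A z φ φt) :
    (∀ f ∈ Set.Icc (0:ℝ) 1,
      0 < (φ f).im ∧ 0 < F1 N T L σ2 bγ A φ φt z f) ∧
    ∃ C > (0:ℝ), ∃ C' > (0:ℝ), ∀ f ∈ Set.Icc (0:ℝ) 1,
      0 < (z * φt f).im ∧ (z * φt f).im < C ∧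
      C' * (((fA N T L A f)ᴴ * fA N T L A f).trace.re)
        ≤ F2 N T L σ2 bγ A φ φt z f := by
  have hdens := IsNormalizedSpectralDensity.of_fourier hγsum hγ0 hbγ hbγc hbγnn hbγper
  obtain ⟨δ, hδ0, hδ⟩ := hadm.exists_pos_le_im hdens hσ.le hz hN hT
  obtain ⟨C, hC0, hC⟩ := hadm.exists_im_mul_lt hdens hσ.le hz
  obtain ⟨C', hC'0, hC'⟩ := hadm.exists_le_F2 hdens hσ.le hz hT
  exact ⟨fun f hf => ⟨hδ0.trans_le (hδ f hf), hadm.F1_pos hdens hσ.le hz hN hT f⟩,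
    C, hC0, C', hC'0, fun f hf => ⟨hadm.im_mul_pos hdens hσ hz hN hT hf, hC f hf, hC' f⟩⟩

theorem bornes_lemma
    (N T L : ℕ) (hN : 0 < N) (hT : 0 < T) (hL : 0 < L)
    (σ2 : ℝ) (hσ : 0 < σ2)
    (γ : ℤ → ℝ) (hγsum : Summable fun k : ℤ => |γ k|) (hγ0 : γ 0 = 1)
    (bγ : ℝ → ℝ)
    (hbγ : ∀ f : ℝ, (bγ f : ℂ)
      = ∑' k : ℤ, (γ k : ℂ) * Complex.exp (2 * Real.pi * Complex.I * (k : ℂ) * (f : ℂ)))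
    (hbγc : Continuous bγ) (hbγnn : ∀ f, 0 ≤ bγ f) (hbγper : Function.Periodic bγ 1)
    (A : ℤ → Matrix (Fin N) (Fin T) ℂ)
    (z : ℂ) (hz : 0 < z.im) (φ φt : ℝ → ℂ)
    (hadm : IsAdmissible N T L σ2 bγ A z φ φt) :
    (∀ f ∈ Set.Icc (0:ℝ) 1,
      0 < (φ f).im ∧ 0 < F1 N T L σ2 bγ A φ φt z f) ∧
    ∃ C > (0:ℝ), ∃ C' > (0:ℝ), ∀ f ∈ Set.Icc (0:ℝ) 1,
      0 < (z * φt f).im ∧ (z * φt f).im < C ∧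
      C' * (((fA N T L A f)ᴴ * fA N T L A f).trace.re)
        ≤ F2 N T L σ2 bγ A φ φt z f :=
  bornes_lemma_general N T L hN hT σ2 hσ γ hγsum hγ0 bγ hbγ hbγc hbγnn hbγper A z hz φ φt hadm
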